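/- Let (W,S) be a Coxeter system, p, q two (I,J)-cosets with q ≤ p in the Bruhat order on double cosets. Then ℓ(q) ≤ ℓ(p), with equality if and only if q = p, where the length of an (I,J)-coset r is ℓ(r) = 2ℓ(max(r)) − ℓ(w_I) − ℓ(w_J). -/

import Mathlib

namespace CoxeterPaper

open CoxeterSystem

variable {B : Type*} {W : Type*} [Group W] {M : CoxeterMatrix B}

/-- The Bruhat order on a Coxeter group: the reflexive-transitive closure of the
relation `a < a * t` for `t` a reflection with length increasing. -/
def BruhatLE (cs : CoxeterSystem M W) (x y : W) : Prop :=
  Relation.ReflTransGen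
    (fun a b => (∃ t, cs.IsReflection t ∧ b = a * t) ∧ cs.length a < cs.length b) x y

/-- One step of the Demazure product with a simple reflection. -/
noncomputable def demStep (cs : CoxeterSystem M W) (x : W) (i : B) : W :=
  if cs.length x < cs.length (x * cs.simple i) then x * cs.simple i else x

/-- The Demazure product of `x` with the word `l`. -/
noncomputable def demWord (cs : CoxeterSystem M W) (x : W) (l : List B) : W :=
  l.foldl (demStep cs) x

/-- The Demazure product (Coxeter monoid product) of two elements: fold the
Demazure action of a reduced word of `y` onto `x`. -/
noncomputable def dem (cs : CoxeterSystem M W) (x y : W) : W :=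
  demWord cs x (Classical.choose (cs.exists_reduced_word y))

/-- The standard parabolic subgroup attached to a set of simple indices. -/
def parabolic (cs : CoxeterSystem M W) (I : Set B) : Subgroup W :=
  Subgroup.closure (cs.simple '' I)

/-- `I` is finitary if the parabolic subgroup `W_I` is finite. -/
def Finitary (cs : CoxeterSystem M W) (I : Set B) : Prop :=
  (parabolic cs I : Set W).Finite

/-- The double coset `W_I w W_J` as a subset of `W`. -/
def doset (cs : CoxeterSystem M W) (I J : Set B) (w : W) : Set W :=
  {x | ∃ a ∈ parabolic cs I, ∃ b ∈ parabolic cs J, x = a * w * b}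

/-- `p` is an `(I,J)`-double coset. -/
def IsDCoset (cs : CoxeterSystem M W) (I J : Set B) (p : Set W) : Prop :=
  ∃ w, p = doset cs I J w

/-- `m` is the Bruhat-minimal element of `p`. -/
def IsMinOf (cs : CoxeterSystem M W) (p : Set W) (m : W) : Prop :=
  m ∈ p ∧ ∀ x ∈ p, BruhatLE cs m x

/-- `m` is the Bruhat-maximal element of `p`. -/
def IsMaxOf (cs : CoxeterSystem M W) (p : Set W) (m : W) : Prop :=
  m ∈ p ∧ ∀ x ∈ p, BruhatLE cs x m

/-- `[I 0, …, I d]` is a singlestep expression. -/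
def IsSinglestep (I : ℕ → Set B) (d : ℕ) : Prop :=
  ∀ k < d, (∃ s, s ∉ I k ∧ I (k + 1) = insert s (I k)) ∨
    (∃ s, s ∈ I k ∧ I (k + 1) = I k \ {s})

/-- `p` is a path subordinate to the singlestep expression `[I 0, …, I d]`. -/
def IsSubPath (cs : CoxeterSystem M W) (I : ℕ → Set B) (d : ℕ) (p : ℕ → Set W) : Prop :=
  p 0 = doset cs (I 0) (I 0) 1 ∧
  (∀ i ≤ d, IsDCoset cs (I 0) (I i) (p i)) ∧
  ∀ k < d, (I k ⊆ I (k + 1) → p k ⊆ p (k + 1)) ∧ (I (k + 1) ⊆ I k → p (k + 1) ⊆ p k)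

/-- The Demazure product `w_{I_0} * w_{I_1} * ⋯ * w_{I_d}` of the longest elements
`wI 0, …, wI d`. -/
noncomputable def exprMax (cs : CoxeterSystem M W) (wI : ℕ → W) (d : ℕ) : W :=
  ((List.range d).map fun k => wI (k + 1)).foldl (dem cs) (wI 0)

/-!
The maximal element `Mp` of the double coset `p` has every `s ∈ I` as a left descent and
every `s ∈ J` as a right descent. By the lifting property (if `x ≤ y` and `y s < y` then
`x s ≤ y`), the Bruhat interval below `Mp` is therefore stable under left multiplication by
`W_I` and right multiplication by `W_J`. As `min q ≤ min p ≤ Mp`, the whole coset `q` lies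
below `Mp`, so `max q ≤ max p`: this gives `ℓ(q) ≤ ℓ(p)`, and equal lengths force
`max q = max p`.

The lifting property is derived from the strong exchange condition, which comes from the
action of `W` on `W × {±1}` in which `s_i` conjugates the first factor and flips the sign
exactly at `s_i`; the sign it attaches to `(w, t)` is `-1` iff `ℓ(w t) < ℓ(w)`.
-/

section ReflectionRepresentation

open List
open scoped Classical

variable (cs : CoxeterSystem M W)

local prefix:100 "s" => cs.simple
local prefix:100 "π" => cs.wordProd
local prefix:100 "ℓ" => cs.length
local prefix:100 "ris " => cs.rightInvSeq
local prefix:100 "lis " => cs.leftInvSeq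

theorem prod_map_alternatingWord_two_mul {G : Type*} [Monoid G] (f : B → G) (i j : B) (p : ℕ) :
    ((alternatingWord i j (2 * p)).map f).prod = (f i * f j) ^ p := by
  induction p with
  | zero => simp [alternatingWord]
  | succ p ih =>
    rw [show 2 * (p + 1) = 2 * p + 1 + 1 by ring, alternatingWord_succ, alternatingWord_succ]
    simp [ih, pow_succ]

theorem count_even_of_getElem_add_eq {α : Type*} [BEq α] [LawfulBEq α] (a : α) {L : List α}
    {p : ℕ} (hlen : L.length = 2 * p) (hper : ∀ k (hk : k < p), L[k + p] = L[k]) :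
    Even (L.count a) := by
  have hdrop : L.drop p = L.take p := by
    apply List.ext_getElem (by simp; omega)
    intro k hk _
    simpa [Nat.add_comm] using hper k (by simp at hk; omega)
  rw [← take_append_drop p L, count_append, hdrop]
  exact ⟨_, rfl⟩

theorem rightInvSeq_eq_leftInvSeq_of_wordProd_eq_one {ω : List B} (h : π ω = 1) :
    ris ω = lis ω := by
  apply List.ext_getElem (by simp)
  intro k hk _
  have hk' : k < ω.length := by simpa using hk
  have hsplit : π ω = π (ω.take k) * s ω[k] * π (ω.drop (k + 1)) := by
    have h := cs.wordProd_append (ω.take (k + 1)) (ω.drop (k + 1))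
    rw [take_append_drop, take_add_one, getElem?_eq_getElem hk'] at h
    simpa only [Option.toList_some, cs.wordProd_append, cs.wordProd_singleton] using h
  have hdrop : π (ω.drop (k + 1)) = (π (ω.take k) * s ω[k])⁻¹ :=
    eq_inv_of_mul_eq_one_right (hsplit ▸ h)
  rw [cs.getElem_rightInvSeq ω k hk', cs.getElem_leftInvSeq ω k hk', hdrop,
    getElem?_eq_getElem hk']
  simp [mul_assoc]

theorem wordProd_alternatingWord_two_mul_eq_one (i j : B) :
    π (alternatingWord i j (2 * M i j)) = 1 := by
  simp [prod_alternatingWord_eq_mul_pow, cs.simple_mul_simple_pow]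

theorem count_rightInvSeq_alternatingWord_two_mul_even (i j : B) (t : W) :
    Even ((ris (alternatingWord i j (2 * M i j))).count t) := by
  rw [rightInvSeq_eq_leftInvSeq_of_wordProd_eq_one cs
    (wordProd_alternatingWord_two_mul_eq_one cs i j)]
  refine count_even_of_getElem_add_eq t (p := M i j) (by simp) fun k hk => ?_
  rw [getElem_leftInvSeq_alternatingWord cs i j _ _ (by omega),
    getElem_leftInvSeq_alternatingWord cs i j _ _ (by omega), prod_alternatingWord_eq_mul_pow,
    prod_alternatingWord_eq_mul_pow]
  have h1 : (2 * (k + M i j) + 1) / 2 = k + M j i := by rw [M.symmetric]; omega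
  have h2 : (2 * k + 1) / 2 = k := by omega
  simp [h1, h2, pow_add, cs.simple_mul_simple_pow]

theorem simple_mul_mul_simple_eq_simple_iff (i : B) (t : W) : s i * t * s i = s i ↔ t = s i := by
  constructor
  · intro h
    simpa [mul_assoc] using congrArg (fun x => s i * x * s i) h
  · rintro rfl
    simp

noncomputable def reflSign (i : B) : Equiv.Perm (W × ℤˣ) :=
  Function.Involutive.toPerm (fun p => (s i * p.1 * s i, if p.1 = s i then -p.2 else p.2)) <| by
    rintro ⟨t, ε⟩
    by_cases ht : t = s i
    · simp [ht]
    · simp only [simple_mul_mul_simple_eq_simple_iff, ht, if_false]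
      simp [mul_assoc]

theorem reflSign_apply (i : B) (t : W) (ε : ℤˣ) :
    reflSign cs i (t, ε) = (s i * t * s i, if t = s i then -ε else ε) :=
  rfl

theorem prod_map_reflSign_apply (ω : List B) (t : W) (ε : ℤˣ) :
    (ω.map (reflSign cs)).prod (t, ε) =
      (π ω * t * (π ω)⁻¹, ε * (-1) ^ (ris ω).count t) := by
  induction ω generalizing t ε with
  | nil => simp
  | cons i ω ih =>
    have hcond : π ω * t * (π ω)⁻¹ = s i ↔ (π ω)⁻¹ * s i * π ω = t := by
      constructor <;> intro h <;> rw [← h] <;> group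
    have hris : ris (i :: ω) = ((π ω)⁻¹ * s i * π ω) :: ris ω := rfl
    rw [map_cons, prod_cons, Equiv.Perm.mul_apply, ih, reflSign_apply, hris, count_cons,
      cs.wordProd_cons]
    simp only [beq_iff_eq]
    by_cases h : (π ω)⁻¹ * s i * π ω = t
    · rw [if_pos (hcond.mpr h), if_pos h]
      simp [pow_succ, mul_assoc]
    · rw [if_neg (mt hcond.mp h), if_neg h]
      simp [mul_assoc]

theorem isLiftable_reflSign : M.IsLiftable (reflSign cs) := by
  intro i j
  rw [← prod_map_alternatingWord_two_mul]
  ext ⟨t, ε⟩ : 1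
  rw [prod_map_reflSign_apply, wordProd_alternatingWord_two_mul_eq_one,
    (count_rightInvSeq_alternatingWord_two_mul_even cs i j t).neg_one_pow]
  simp

noncomputable def reflRep : W →* Equiv.Perm (W × ℤˣ) :=
  cs.lift ⟨reflSign cs, isLiftable_reflSign cs⟩

noncomputable def inversionSign (w t : W) : ℤˣ :=
  (reflRep cs w (t, 1)).2

theorem reflRep_wordProd_apply (ω : List B) (t : W) (ε : ℤˣ) :
    reflRep cs (π ω) (t, ε) = (π ω * t * (π ω)⁻¹, ε * (-1) ^ (ris ω).count t) := by
  rw [← prod_map_reflSign_apply, CoxeterSystem.wordProd, map_list_prod, map_map]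
  congr 3
  ext i : 1
  exact cs.lift_apply_simple (isLiftable_reflSign cs) i

theorem inversionSign_wordProd (ω : List B) (t : W) :
    inversionSign cs (π ω) t = (-1) ^ (ris ω).count t := by
  simp [inversionSign, reflRep_wordProd_apply]

theorem reflRep_apply (w t : W) (ε : ℤˣ) :
    reflRep cs w (t, ε) = (w * t * w⁻¹, ε * inversionSign cs w t) := by
  obtain ⟨ω, rfl⟩ := cs.wordProd_surjective w
  rw [reflRep_wordProd_apply, inversionSign_wordProd]

theorem inversionSign_mul (w₁ w₂ t : W) :
    inversionSign cs (w₁ * w₂) t =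
      inversionSign cs w₂ t * inversionSign cs w₁ (w₂ * t * w₂⁻¹) := by
  have h := reflRep_apply cs (w₁ * w₂) t 1
  rw [map_mul, Equiv.Perm.mul_apply, reflRep_apply cs w₂, reflRep_apply cs w₁] at h
  simpa using (congrArg Prod.snd h).symm

theorem inversionSign_one (t : W) : inversionSign cs 1 t = 1 := by
  simp [inversionSign]

theorem inversionSign_simple_self (i : B) : inversionSign cs (s i) (s i) = -1 := by
  simp [inversionSign, reflRep, reflSign_apply]

theorem inversionSign_self {t : W} (ht : cs.IsReflection t) : inversionSign cs t t = -1 := by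
  obtain ⟨v, i, rfl⟩ := ht
  have hinv : inversionSign cs v (s i) * inversionSign cs v⁻¹ (v * s i * v⁻¹) = 1 := by
    simpa [inversionSign_one] using (inversionSign_mul cs v⁻¹ v (s i)).symm
  have hconj : v⁻¹ * (v * s i * v⁻¹) * v⁻¹⁻¹ = s i := by group
  rw [inversionSign_mul cs (v * s i) v⁻¹, hconj, inversionSign_mul cs v (s i),
    cs.simple_mul_simple_self, one_mul, cs.inv_simple, inversionSign_simple_self, neg_one_mul,
    mul_neg, mul_comm, hinv]

theorem inversionSign_wordProd_eq_neg_one_iff {ω : List B} (hω : cs.IsReduced ω) (t : W) :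
    inversionSign cs (π ω) t = -1 ↔ t ∈ ris ω := by
  rw [inversionSign_wordProd, hω.nodup_rightInvSeq.count]
  split_ifs with h <;> simp [h]

theorem length_mul_lt_of_inversionSign_eq_neg_one {w t : W} (h : inversionSign cs w t = -1) :
    ℓ (w * t) < ℓ w := by
  obtain ⟨ω, hω, rfl⟩ := cs.exists_isReduced w
  exact (cs.isRightInversion_of_mem_rightInvSeq hω
    ((inversionSign_wordProd_eq_neg_one_iff cs hω t).mp h)).2

theorem inversionSign_eq_neg_one_iff {t : W} (ht : cs.IsReflection t) (w : W) :
    inversionSign cs w t = -1 ↔ ℓ (w * t) < ℓ w := by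
  refine ⟨length_mul_lt_of_inversionSign_eq_neg_one cs, fun hlt => ?_⟩
  by_contra hne
  have h1 : inversionSign cs w t = 1 := (Int.units_eq_one_or _).resolve_right hne
  have h2 : inversionSign cs (w * t) t = -1 := by
    rw [inversionSign_mul, inversionSign_self cs ht, ht.mul_self, one_mul, ht.inv, h1, mul_one]
  have h3 := length_mul_lt_of_inversionSign_eq_neg_one cs h2
  rw [mul_assoc, ht.mul_self, mul_one] at h3
  omega

theorem strong_exchange {ω : List B} (hω : cs.IsReduced ω) {t : W} (ht : cs.IsReflection t)
    (hlt : ℓ (π ω * t) < ℓ (π ω)) : ∃ j < ω.length, π ω * t = π (ω.eraseIdx j) := by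
  have hmem : t ∈ ris ω := (inversionSign_wordProd_eq_neg_one_iff cs hω t).mp
    ((inversionSign_eq_neg_one_iff cs ht _).mpr hlt)
  obtain ⟨j, hj, rfl⟩ := List.mem_iff_getElem.mp hmem
  refine ⟨j, by simpa using hj, ?_⟩
  rw [← List.getD_eq_getElem _ 1 hj, cs.wordProd_mul_getD_rightInvSeq]

end ReflectionRepresentation

section BruhatOrder

variable {cs : CoxeterSystem M W}

local prefix:100 "s" => cs.simple
local prefix:100 "π" => cs.wordProd
local prefix:100 "ℓ" => cs.length

theorem BruhatLE.refl (x : W) : BruhatLE cs x x :=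
  Relation.ReflTransGen.refl

theorem BruhatLE.trans {x y z : W} (h₁ : BruhatLE cs x y) (h₂ : BruhatLE cs y z) :
    BruhatLE cs x z :=
  Relation.ReflTransGen.trans h₁ h₂

theorem BruhatLE.length_le {x y : W} (h : BruhatLE cs x y) : ℓ x ≤ ℓ y := by
  induction h with
  | refl => exact le_rfl
  | tail _ hstep ih => exact ih.trans hstep.2.le

theorem BruhatLE.eq_of_length_le {x y : W} (h : BruhatLE cs x y) (hl : ℓ y ≤ ℓ x) :
    x = y := by
  rcases Relation.ReflTransGen.cases_head h with hxy | ⟨c, hxc, hcy⟩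
  · exact hxy
  · exact absurd (hxc.2.trans_le (BruhatLE.length_le hcy)) hl.not_gt

theorem BruhatLE.antisymm {x y : W} (h₁ : BruhatLE cs x y) (h₂ : BruhatLE cs y x) : x = y :=
  h₁.eq_of_length_le h₂.length_le

theorem bruhatLE_mul_reflection {x t : W} (ht : cs.IsReflection t) (hl : ℓ x < ℓ (x * t)) :
    BruhatLE cs x (x * t) :=
  Relation.ReflTransGen.single ⟨⟨t, ht, rfl⟩, hl⟩

theorem BruhatLE.inv {x y : W} (h : BruhatLE cs x y) : BruhatLE cs x⁻¹ y⁻¹ := by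
  induction h with
  | refl => exact BruhatLE.refl _
  | @tail z y _ hstep ih =>
    obtain ⟨⟨t, ht, rfl⟩, hlt⟩ := hstep
    have hinv : (z * t)⁻¹ = z⁻¹ * (z * t * z⁻¹) := by rw [mul_inv_rev, ht.inv]; group
    refine ih.trans (hinv ▸ bruhatLE_mul_reflection (ht.conj z) ?_)
    rwa [← hinv, cs.length_inv, cs.length_inv]

theorem bruhatLE_mul_simple_of_isRightDescent {x : W} {i : B} (h : cs.IsRightDescent x i) :
    BruhatLE cs (x * s i) x := by
  simpa using bruhatLE_mul_reflection (x := x * s i) (cs.isReflection_simple i)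
    (by rwa [cs.simple_mul_simple_cancel_right])

theorem bruhatLE_mul_simple_of_not_isRightDescent {x : W} {i : B} (h : ¬cs.IsRightDescent x i) :
    BruhatLE cs x (x * s i) :=
  bruhatLE_mul_reflection (cs.isReflection_simple i)
    (by rw [cs.not_isRightDescent_iff.mp h]; omega)

theorem bruhatLE_mul_simple_mul_reflection_mul_simple {z t : W} {i : B} (ht : cs.IsReflection t)
    (hl : ℓ (z * s i) < ℓ (z * t * s i)) : BruhatLE cs (z * s i) (z * t * s i) := by
  have hconj : z * t * s i = z * s i * (s i * t * s i) := by simp [mul_assoc]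
  rw [hconj] at hl ⊢
  exact bruhatLE_mul_reflection (by simpa [cs.inv_simple] using ht.conj (s i)) hl

theorem mul_simple_eq_of_length_mul_reflection {z t : W} {i : B} (ht : cs.IsReflection t)
    (hcover : ℓ (z * t) = ℓ z + 1) (hz : ¬cs.IsRightDescent z i)
    (hzt : cs.IsRightDescent (z * t) i) : z * s i = z * t := by
  obtain ⟨ω, hω, hωprod⟩ := cs.exists_isReduced (z * t * s i)
  have hzs := cs.not_isRightDescent_iff.mp hz
  have hzts := cs.isRightDescent_iff.mp hzt
  have hprod : π (ω ++ [i]) = z * t := by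
    rw [cs.wordProd_append, ← hωprod, cs.wordProd_singleton, cs.simple_mul_simple_cancel_right]
  have hred : cs.IsReduced (ω ++ [i]) := by
    rw [CoxeterSystem.IsReduced, hprod, List.length_append, List.length_singleton, ← hω.eq,
      ← hωprod, hzts]
  have hlt : ℓ (π (ω ++ [i]) * t) < ℓ (π (ω ++ [i])) := by
    rw [hprod, mul_assoc, ht.mul_self, mul_one]
    omega
  -- Deleting a letter other than the final `i` would leave `z * s i` shorter than `z`.
  obtain ⟨j, hj, hexch⟩ := strong_exchange cs hred ht hlt
  rw [hprod, mul_assoc, ht.mul_self, mul_one] at hexch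
  rcases Nat.lt_or_ge j ω.length with hjω | hjω
  · rw [List.eraseIdx_append_of_lt_length hjω, cs.wordProd_append,
      cs.wordProd_singleton] at hexch
    have hle : ℓ (z * s i) ≤ ω.length - 1 := by
      rw [hexch, cs.simple_mul_simple_cancel_right]
      simpa [List.length_eraseIdx, hjω] using cs.length_wordProd_le (ω.eraseIdx j)
    have := hω.eq
    rw [← hωprod] at this
    omega
  · have hj' : j = ω.length := by simp at hj; omega
    rw [hj', List.eraseIdx_append_of_length_le le_rfl, Nat.sub_self, List.eraseIdx_cons_zero,
      List.append_nil, ← hωprod] at hexch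
    nth_rw 1 [hexch]
    exact cs.simple_mul_simple_cancel_right _

theorem bruhatLE_mul_simple_of_mul_reflection {z t : W} {i : B} (ht : cs.IsReflection t)
    (hlt : ℓ z < ℓ (z * t)) (hz : ¬cs.IsRightDescent z i) (hzt : cs.IsRightDescent (z * t) i) :
    BruhatLE cs (z * s i) (z * t) := by
  have hne : ℓ (z * t * s i) ≠ ℓ (z * s i) := by
    rw [show z * t * s i = z * s i * (s i * t * s i) by simp [mul_assoc]]
    exact (by simpa [cs.inv_simple] using ht.conj (s i) : cs.IsReflection _).length_mul_left_ne _
  rcases hne.lt_or_gt with hlt' | hgt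
  · have hcover : ℓ (z * t) = ℓ z + 1 := by
      have := cs.isRightDescent_iff.mp hzt
      have := cs.not_isRightDescent_iff.mp hz
      omega
    rw [mul_simple_eq_of_length_mul_reflection ht hcover hz hzt]
    exact BruhatLE.refl _
  · exact (bruhatLE_mul_simple_mul_reflection_mul_simple ht hgt).trans
      (bruhatLE_mul_simple_of_isRightDescent hzt)

/-- The lifting property. Its two halves are proved together because the induction step of each
uses the induction hypothesis of the other. -/
theorem BruhatLE.lifting {x y : W} (h : BruhatLE cs x y) (i : B) :
    (cs.IsRightDescent y i → BruhatLE cs (x * s i) y) ∧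
      (¬cs.IsRightDescent x i → ¬cs.IsRightDescent y i →
        BruhatLE cs (x * s i) (y * s i)) := by
  induction h with
  | refl => exact ⟨bruhatLE_mul_simple_of_isRightDescent, fun _ _ => BruhatLE.refl _⟩
  | @tail z y hxz hzy ih =>
    obtain ⟨⟨t, ht, rfl⟩, hlt⟩ := hzy
    have hstep : BruhatLE cs z (z * t) := bruhatLE_mul_reflection ht hlt
    constructor
    · intro hy
      by_cases hzi : cs.IsRightDescent z i
      · exact (ih.1 hzi).trans hstep
      by_cases hxi : cs.IsRightDescent x i
      · exact (bruhatLE_mul_simple_of_isRightDescent hxi).trans (hxz.trans hstep)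
      exact (ih.2 hxi hzi).trans (bruhatLE_mul_simple_of_mul_reflection ht hlt hzi hy)
    · intro hxi hyi
      by_cases hzi : cs.IsRightDescent z i
      · exact (ih.1 hzi).trans (hstep.trans (bruhatLE_mul_simple_of_not_isRightDescent hyi))
      · refine (ih.2 hxi hzi).trans (bruhatLE_mul_simple_mul_reflection_mul_simple ht ?_)
        have := cs.not_isRightDescent_iff.mp hzi
        have := cs.not_isRightDescent_iff.mp hyi
        omega

theorem BruhatLE.mul_mem_parabolic {J : Set B} {x y b : W} (h : BruhatLE cs x y)
    (hy : ∀ j ∈ J, cs.IsRightDescent y j) (hb : b ∈ parabolic cs J) :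
    BruhatLE cs (x * b) y := by
  induction hb using Subgroup.closure_induction'' generalizing x with
  | mem _ hg =>
    obtain ⟨j, hj, rfl⟩ := hg
    exact (h.lifting j).1 (hy j hj)
  | inv_mem _ hg =>
    obtain ⟨j, hj, rfl⟩ := hg
    rw [cs.inv_simple]
    exact (h.lifting j).1 (hy j hj)
  | one => simpa using h
  | mul b₁ b₂ _ _ ih₁ ih₂ =>
    rw [← mul_assoc]
    exact ih₂ (ih₁ h)

theorem BruhatLE.mem_parabolic_mul {I : Set B} {x y a : W} (h : BruhatLE cs x y)
    (hy : ∀ i ∈ I, cs.IsLeftDescent y i) (ha : a ∈ parabolic cs I) :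
    BruhatLE cs (a * x) y := by
  simpa using (h.inv.mul_mem_parabolic (fun i hi => cs.isRightDescent_inv_iff.mpr (hy i hi))
    (inv_mem ha)).inv

end BruhatOrder

section DoubleCosets

variable {cs : CoxeterSystem M W} {I J : Set B}

local prefix:100 "s" => cs.simple

theorem doset_eq_of_mem {w x : W} (hx : x ∈ doset cs I J w) :
    doset cs I J x = doset cs I J w := by
  obtain ⟨a, ha, b, hb, rfl⟩ := hx
  ext y
  constructor
  · rintro ⟨a', ha', b', hb', rfl⟩
    exact ⟨a' * a, mul_mem ha' ha, b * b', mul_mem hb hb', by group⟩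
  · rintro ⟨a', ha', b', hb', rfl⟩
    exact ⟨a' * a⁻¹, mul_mem ha' (inv_mem ha), b⁻¹ * b', mul_mem (inv_mem hb) hb',
      by group⟩

theorem IsMaxOf.isLeftDescent {w m : W} (hm : IsMaxOf cs (doset cs I J w) m) {i : B}
    (hi : i ∈ I) : cs.IsLeftDescent m i := by
  obtain ⟨a, ha, b, hb, hab⟩ := hm.1
  have hmem : s i * m ∈ doset cs I J w :=
    ⟨s i * a, mul_mem (Subgroup.subset_closure ⟨i, hi, rfl⟩) ha, b, hb, by rw [hab]; group⟩
  exact (hm.2 _ hmem).length_le.lt_of_ne (cs.length_simple_mul_ne m i)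

theorem IsMaxOf.isRightDescent {w m : W} (hm : IsMaxOf cs (doset cs I J w) m) {j : B}
    (hj : j ∈ J) : cs.IsRightDescent m j := by
  obtain ⟨a, ha, b, hb, hab⟩ := hm.1
  have hmem : m * s j ∈ doset cs I J w :=
    ⟨a, ha, b * s j, mul_mem hb (Subgroup.subset_closure ⟨j, hj, rfl⟩), by rw [hab]; group⟩
  exact (hm.2 _ hmem).length_le.lt_of_ne (cs.length_mul_simple_ne m j)

theorem IsMaxOf.bruhatLE_of_mem_doset {w m x y : W} (hm : IsMaxOf cs (doset cs I J w) m)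
    (hx : BruhatLE cs x m) (hy : y ∈ doset cs I J x) : BruhatLE cs y m := by
  obtain ⟨a, ha, b, hb, rfl⟩ := hy
  rw [mul_assoc]
  exact (hx.mul_mem_parabolic (fun j => hm.isRightDescent) hb).mem_parabolic_mul
    (fun i => hm.isLeftDescent) ha

end DoubleCosets

theorem doset_length_mono_general (cs : CoxeterSystem M W) (I J : Set B) (wI wJ : W)
    (u v mq mp Mq Mp : W)
    (hmq : IsMinOf cs (doset cs I J u) mq) (hmp : IsMinOf cs (doset cs I J v) mp)
    (hMq : IsMaxOf cs (doset cs I J u) Mq) (hMp : IsMaxOf cs (doset cs I J v) Mp)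
    (hle : BruhatLE cs mq mp) :
    (2 * (cs.length Mq : ℤ) - cs.length wI - cs.length wJ) ≤
        2 * (cs.length Mp : ℤ) - cs.length wI - cs.length wJ ∧
      ((2 * (cs.length Mq : ℤ) - cs.length wI - cs.length wJ) =
          2 * (cs.length Mp : ℤ) - cs.length wI - cs.length wJ ↔
        doset cs I J u = doset cs I J v) := by
  have hMq_mem : Mq ∈ doset cs I J mq := (doset_eq_of_mem hmq.1).symm ▸ hMq.1
  have hMq_le : BruhatLE cs Mq Mp := hMp.bruhatLE_of_mem_doset (hle.trans (hMp.2 mp hmp.1)) hMq_mem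
  have hdoset : doset cs I J u = doset cs I J v ↔ Mq = Mp := by
    constructor
    · intro h
      exact hMq_le.antisymm (hMq.2 Mp (h ▸ hMp.1))
    · rintro rfl
      rw [← doset_eq_of_mem hMq.1, doset_eq_of_mem hMp.1]
  have hlen := hMq_le.length_le
  refine ⟨by omega, ?_⟩
  rw [hdoset]
  exact ⟨fun h => hMq_le.eq_of_length_le (by omega), by rintro rfl; rfl⟩

/-- The Bruhat order on double cosets respects the length
`ℓ(r) = 2ℓ(max r) − ℓ(w_I) − ℓ(w_J)`: if `q ≤ p` then `ℓ(q) ≤ ℓ(p)`, with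
equality iff `q = p`. -/
theorem doset_length_mono (cs : CoxeterSystem M W) (I J : Set B)
    (hI : Finitary cs I) (hJ : Finitary cs J) (wI wJ : W)
    (hwI : IsMaxOf cs (parabolic cs I : Set W) wI)
    (hwJ : IsMaxOf cs (parabolic cs J : Set W) wJ)
    (u v mq mp Mq Mp : W)
    (hmq : IsMinOf cs (doset cs I J u) mq) (hmp : IsMinOf cs (doset cs I J v) mp)
    (hMq : IsMaxOf cs (doset cs I J u) Mq) (hMp : IsMaxOf cs (doset cs I J v) Mp)
    (hle : BruhatLE cs mq mp) :
    (2 * (cs.length Mq : ℤ) - cs.length wI - cs.length wJ) ≤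
        2 * (cs.length Mp : ℤ) - cs.length wI - cs.length wJ ∧
      ((2 * (cs.length Mq : ℤ) - cs.length wI - cs.length wJ) =
          2 * (cs.length Mp : ℤ) - cs.length wI - cs.length wJ ↔
        doset cs I J u = doset cs I J v) :=
  doset_length_mono_general cs I J wI wJ u v mq mp Mq Mp hmq hmp hMq hMp hle

end CoxeterPaper
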